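/- arXiv:1401.1293 — 2 statements merged into one kernel-verified Lean document; each statement's English description precedes it below -/
import Mathlib

section
/- The S-linear map M^r → M sending (x₁,…,x_r) to x₁ restricts to an isomorphism from the kernel of ĩ − j̃ onto the kernel of i − j, and the S-linear map M^{r−1} × M′ → M′ sending (x₁,…,x_{r−1}, x′) to x′ − Σ_{s+t≤r, s,t≥1} j_{s+t}(j₀^{s−1}(x_t)) induces an isomorphism from the cokernel of ĩ − j̃ onto the cokernel of i − j. In particular, the two-term complex (M^r → M^{r−1} × M′) given by ĩ − j̃ is quasi-isomorphic to the two-term complex (M → M′) given by i − j. -/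
/-!
With indices from `0`, the complex `d = ĩ − j̃ : M^{m+1} → M^m × M′` deformation retracts
onto `d′ = i − j : M → M′`. The inclusion is `h x = (x, j₀ x, …, j₀^m x)`, `k x′ = (0, x′)`;
the retraction is `f x = x₀`, `g (y, x′) = x′ − corr y`; the homotopy
`H (y, x′)_t = −Σ_{a<t} j₀^{t−1−a} y_a` solves the recursion `x_{t+1} = j₀ x_t − y_t` imposed by
the first components of `d`. Then `f h = 1`, `g k = 1`, `1 − h f = H d` and `1 − k g = d H`.
The remaining chain-map identity `g d = d′ f` need not be computed, since these four force it:
`g d = g d (h f + H d) = d′ f + g (1 − k g) d = d′ f`. A deformation retraction induces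
isomorphisms on kernels and on cokernels.
-/

section

variable {S M M' : Type*} [CommRing S] [AddCommGroup M] [Module S M]
  [AddCommGroup M'] [Module S M']

/-- `ĩ(x₁,…,x_r) = (−x₂,…,−x_r, i(x₁))` with `r = m + 1`. -/
noncomputable def itilde (m : ℕ) (i : M →ₗ[S] M') :
    (Fin (m + 1) → M) →ₗ[S] (Fin m → M) × M' :=
  LinearMap.prod
    (LinearMap.pi fun s : Fin m => -LinearMap.proj s.succ)
    (i ∘ₗ LinearMap.proj 0)

/-- `j̃(x₁,…,x_r) = (−j₀(x₁),…,−j₀(x_{r−1}), Σ_{s=1}^r j_s(x_s))` with `r = m + 1`,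
where `j s` (for `s : Fin (m+1)`) denotes `j_{s+1}`. -/
noncomputable def jtilde (m : ℕ) (j₀ : M →ₗ[S] M) (j : Fin (m + 1) → M →ₗ[S] M') :
    (Fin (m + 1) → M) →ₗ[S] (Fin m → M) × M' :=
  LinearMap.prod
    (LinearMap.pi fun s : Fin m => -(j₀ ∘ₗ LinearMap.proj s.castSucc))
    (∑ s : Fin (m + 1), (j s) ∘ₗ LinearMap.proj s)

/-- `j = Σ_{s=1}^r j_s ∘ j₀^{s−1}` with `r = m + 1`. -/
noncomputable def jsum (m : ℕ) (j₀ : M →ₗ[S] M) (j : Fin (m + 1) → M →ₗ[S] M') :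
    M →ₗ[S] M' :=
  ∑ s : Fin (m + 1), (j s) ∘ₗ (j₀ ^ (s : ℕ))

/-- `(x₁,…,x_{r−1}) ↦ Σ_{s+t≤r, s,t≥1} j_{s+t}(j₀^{s−1}(x_t))` with `r = m + 1`. -/
noncomputable def corr (m : ℕ) (j₀ : M →ₗ[S] M) (j : Fin (m + 1) → M →ₗ[S] M') :
    (Fin m → M) →ₗ[S] M' :=
  ∑ t : Fin m, ∑ s : Fin (m - (t : ℕ)),
    (j ⟨(s : ℕ) + (t : ℕ) + 1, by have hs := s.isLt; have ht := t.isLt; omega⟩) ∘ₗ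
      ((j₀ ^ (s : ℕ)) ∘ₗ LinearMap.proj t)

section DeformationRetract

variable {R A B A' B' : Type*} [Ring R] [AddCommGroup A] [Module R A] [AddCommGroup B]
  [Module R B] [AddCommGroup A'] [Module R A'] [AddCommGroup B'] [Module R B']
  {d : A →ₗ[R] B} {d' : A' →ₗ[R] B'} {f : A →ₗ[R] A'} {g : B →ₗ[R] B'} {h : A' →ₗ[R] A}
  {k : B' →ₗ[R] B} {H : B →ₗ[R] A}

theorem comp_eq_comp_of_retract (hdh : d ∘ₗ h = k ∘ₗ d') (hgk : g ∘ₗ k = LinearMap.id)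
    (hhf : LinearMap.id - h ∘ₗ f = H ∘ₗ d) (hkg : LinearMap.id - k ∘ₗ g = d ∘ₗ H) :
    g ∘ₗ d = d' ∘ₗ f := by
  ext x
  have hx : x = h (f x) + H (d x) := by
    rw [← LinearMap.comp_apply H, ← hhf]; simp
  have hdH : d (H (d x)) = d x - k (g (d x)) := by
    rw [← LinearMap.comp_apply d H, ← hkg]; simp
  have hgk' : ∀ y, g (k y) = y := fun y => LinearMap.congr_fun hgk y
  have hdh' : d (h (f x)) = k (d' (f x)) := LinearMap.congr_fun hdh (f x)
  simp only [LinearMap.comp_apply]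
  conv_lhs => rw [hx]
  rw [map_add, map_add, hdh', hdH, map_sub, hgk', hgk']
  abel

def kerEquivOfRetract (hgd : g ∘ₗ d = d' ∘ₗ f) (hdh : d ∘ₗ h = k ∘ₗ d')
    (hfh : f ∘ₗ h = LinearMap.id) (hhf : LinearMap.id - h ∘ₗ f = H ∘ₗ d) :
    LinearMap.ker d ≃ₗ[R] LinearMap.ker d' :=
  LinearEquiv.ofLinearMap
    (f.restrict fun x (hx : d x = 0) => by
      simp [LinearMap.mem_ker, ← LinearMap.comp_apply d' f, ← hgd, hx])
    (h.restrict fun x (hx : d' x = 0) => by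
      simp [LinearMap.mem_ker, ← LinearMap.comp_apply d h, hdh, hx])
    (by ext x; exact LinearMap.congr_fun hfh x)
    (by
      ext ⟨x, hx⟩
      change h (f x) = x
      have hhfx := LinearMap.congr_fun hhf x
      rw [LinearMap.comp_apply, LinearMap.mem_ker.mp hx, map_zero, LinearMap.sub_apply,
        sub_eq_zero] at hhfx
      exact hhfx.symm)

def cokerEquivOfRetract (hgd : g ∘ₗ d = d' ∘ₗ f) (hdh : d ∘ₗ h = k ∘ₗ d')
    (hgk : g ∘ₗ k = LinearMap.id) (hkg : LinearMap.id - k ∘ₗ g = d ∘ₗ H) :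
    (B ⧸ LinearMap.range d) ≃ₗ[R] (B' ⧸ LinearMap.range d') :=
  LinearEquiv.ofLinearMap
    (Submodule.mapQ _ _ g <| Submodule.map_le_iff_le_comap.mp <| by
      rw [← LinearMap.range_comp, hgd]; exact LinearMap.range_comp_le_range _ _)
    (Submodule.mapQ _ _ k <| Submodule.map_le_iff_le_comap.mp <| by
      rw [← LinearMap.range_comp, ← hdh]; exact LinearMap.range_comp_le_range _ _)
    (by ext y; simp [← LinearMap.comp_apply g k, hgk])
    (by
      ext y
      simp only [LinearMap.comp_apply, Submodule.mkQ_apply, Submodule.mapQ_apply,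
        LinearMap.id_apply, Submodule.Quotient.eq]
      refine ⟨-H y, ?_⟩
      rw [map_neg, ← LinearMap.comp_apply d H, ← hkg]
      simp)

end DeformationRetract

section Retraction

variable (m : ℕ) (i : M →ₗ[S] M') (j₀ : M →ₗ[S] M) (j : Fin (m + 1) → M →ₗ[S] M')

noncomputable def powersMap : M →ₗ[S] (Fin (m + 1) → M) :=
  LinearMap.pi fun s => j₀ ^ (s : ℕ)

noncomputable def retractHomotopy : (Fin m → M) →ₗ[S] (Fin (m + 1) → M) :=
  LinearMap.pi fun t =>
    -∑ a : Fin m with a.val < t.val, (j₀ ^ (t.val - 1 - a.val)) ∘ₗ LinearMap.proj a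

theorem itilde_sub_jtilde_apply (x : Fin (m + 1) → M) :
    (itilde m i - jtilde m j₀ j) x =
      (fun s : Fin m => j₀ (x s.castSucc) - x s.succ, i (x 0) - ∑ s, j s (x s)) := by
  ext s
  · simp only [itilde, jtilde, LinearMap.sub_apply, LinearMap.prod_apply, Function.prod,
      Prod.fst_sub, Pi.sub_apply, LinearMap.pi_apply, LinearMap.neg_apply,
      LinearMap.proj_apply, LinearMap.comp_apply]
    abel
  · simp [itilde, jtilde]

theorem retractHomotopy_apply (y : Fin m → M) (t : Fin (m + 1)) :
    retractHomotopy m j₀ y t =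
      -∑ a : Fin m with a.val < t.val, (j₀ ^ (t.val - 1 - a.val)) (y a) := by
  simp [retractHomotopy]

theorem retractHomotopy_apply_zero (y : Fin m → M) : retractHomotopy m j₀ y 0 = 0 := by
  simp [retractHomotopy]

theorem retractHomotopy_apply_succ (y : Fin m → M) (s : Fin m) :
    retractHomotopy m j₀ y s.succ = j₀ (retractHomotopy m j₀ y s.castSucc) - y s := by
  have hterm : ∀ a : Fin m,
      (if a.val < s.val + 1 then (j₀ ^ (s.val + 1 - 1 - a.val)) (y a) else 0) =
        j₀ (if a.val < s.val then (j₀ ^ (s.val - 1 - a.val)) (y a) else 0) +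
          if s = a then y a else 0 := by
    intro a
    rcases lt_trichotomy a.val s.val with h | h | h
    · rw [if_pos (by omega), if_pos h, if_neg (by omega), add_zero, ← Module.End.mul_apply,
        ← pow_succ', show s.val - 1 - a.val + 1 = s.val + 1 - 1 - a.val by omega]
    · obtain rfl := Fin.ext h
      simp
    · rw [if_neg (by omega), if_neg (by omega), if_neg (by omega), map_zero, add_zero]
  simp only [retractHomotopy_apply, Finset.sum_filter, Fin.val_succ, Fin.val_castSucc, map_neg,
    map_sum]
  rw [Finset.sum_congr rfl fun a _ => hterm a, Finset.sum_add_distrib, Finset.sum_ite_eq]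
  simp only [Finset.mem_univ, if_true]
  abel

theorem sum_apply_retractHomotopy (y : Fin m → M) :
    ∑ s, j s (retractHomotopy m j₀ y s) = -corr m j₀ j y := by
  have hreindex : ∀ t : Fin m,
      ∑ s : Fin (m + 1) with t.val < s.val, j s ((j₀ ^ (s.val - 1 - t.val)) (y t)) =
        ∑ b : Fin (m - t.val), j ⟨b.val + t.val + 1, by omega⟩ ((j₀ ^ b.val) (y t)) := by
    intro t
    symm
    refine Finset.sum_bij (fun b _ => ⟨b.val + t.val + 1, by omega⟩) (by simp) ?_ ?_ ?_
    · intro b₁ _ b₂ _ hb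
      simpa [Fin.ext_iff] using hb
    · intro s hs
      simp only [Finset.mem_filter, Finset.mem_univ, true_and] at hs
      exact ⟨⟨s.val - t.val - 1, by omega⟩, Finset.mem_univ _, Fin.ext (by simp; omega)⟩
    · intro b _
      simp only [show b.val + t.val + 1 - 1 - t.val = b.val by omega]
  simp only [retractHomotopy_apply, map_neg, map_sum, Finset.sum_neg_distrib, corr,
    LinearMap.sum_apply, LinearMap.comp_apply, LinearMap.proj_apply]
  rw [Finset.sum_comm' (t' := Finset.univ) (s' := fun t => {s | t.val < s.val}) (by simp)]
  simp only [hreindex]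

noncomputable def sndSubCorr : (Fin m → M) × M' →ₗ[S] M' :=
  LinearMap.snd S _ _ - corr m j₀ j ∘ₗ LinearMap.fst S _ _

theorem itilde_sub_jtilde_comp_powersMap :
    (itilde m i - jtilde m j₀ j) ∘ₗ powersMap m j₀ =
      LinearMap.inr S _ _ ∘ₗ (i - jsum m j₀ j) := by
  refine LinearMap.ext fun x => ?_
  rw [LinearMap.comp_apply, itilde_sub_jtilde_apply]
  ext s
  · simp [powersMap, pow_succ']
  · simp [powersMap, jsum]

theorem proj_zero_comp_powersMap :
    LinearMap.proj 0 ∘ₗ powersMap m j₀ = LinearMap.id := by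
  ext x
  simp [powersMap]

theorem id_sub_powersMap_comp_proj_zero :
    LinearMap.id - powersMap m j₀ ∘ₗ LinearMap.proj 0 =
      (retractHomotopy m j₀ ∘ₗ LinearMap.fst S _ M') ∘ₗ (itilde m i - jtilde m j₀ j) := by
  refine LinearMap.ext fun x => funext fun t => ?_
  rw [LinearMap.comp_apply, LinearMap.comp_apply, itilde_sub_jtilde_apply]
  simp only [LinearMap.fst_apply, LinearMap.comp_apply, LinearMap.sub_apply, LinearMap.id_apply,
    Pi.sub_apply, powersMap, LinearMap.pi_apply, LinearMap.proj_apply]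
  induction t using Fin.induction with
  | zero => simp [retractHomotopy_apply_zero]
  | succ s ih =>
    rw [retractHomotopy_apply_succ, ← ih, Fin.val_succ, pow_succ', Module.End.mul_apply,
      Fin.val_castSucc, map_sub]
    abel

theorem sndSubCorr_comp_inr : sndSubCorr m j₀ j ∘ₗ LinearMap.inr S _ _ = LinearMap.id := by
  ext x
  simp [sndSubCorr]

theorem id_sub_inr_comp_sndSubCorr :
    LinearMap.id - LinearMap.inr S _ _ ∘ₗ sndSubCorr m j₀ j =
      (itilde m i - jtilde m j₀ j) ∘ₗ (retractHomotopy m j₀ ∘ₗ LinearMap.fst S _ M') := by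
  refine LinearMap.ext fun ⟨y, x'⟩ => ?_
  rw [LinearMap.comp_apply, LinearMap.comp_apply, itilde_sub_jtilde_apply]
  ext s
  · simp [retractHomotopy_apply_succ, sndSubCorr]
  · simp [retractHomotopy_apply_zero, sum_apply_retractHomotopy, sndSubCorr]
end Retraction

/-- the projection to the first coordinate restricts to an isomorphism
`ker (ĩ − j̃) ≃ ker (i − j)`, and the map `(x₁,…,x_{r−1},x′) ↦
x′ − Σ_{s+t≤r, s,t≥1} j_{s+t}(j₀^{s−1}(x_t))` induces an isomorphism
`coker (ĩ − j̃) ≃ coker (i − j)`; in particular the two-term complex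
`ĩ − j̃ : M^r → M^{r−1} × M′` is quasi-isomorphic to the two-term complex
`i − j : M → M′` (here `r = m + 1 ≥ 1` and `j = Σ_{s=1}^r j_s ∘ j₀^{s−1}`). -/
theorem stmt_3 (m : ℕ) (i : M →ₗ[S] M') (j₀ : M →ₗ[S] M)
    (j : Fin (m + 1) → M →ₗ[S] M') :
    (∃ e : LinearMap.ker (itilde m i - jtilde m j₀ j) ≃ₗ[S]
        LinearMap.ker (i - jsum m j₀ j),
        ∀ x : LinearMap.ker (itilde m i - jtilde m j₀ j),
          (e x : M) = (x : Fin (m + 1) → M) 0) ∧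
    (∃ e : (((Fin m → M) × M') ⧸ LinearMap.range (itilde m i - jtilde m j₀ j)) ≃ₗ[S]
        (M' ⧸ LinearMap.range (i - jsum m j₀ j)),
        ∀ y : (Fin m → M) × M',
          e (Submodule.Quotient.mk y) = Submodule.Quotient.mk (y.2 - corr m j₀ j y.1)) := by
  have hdh := itilde_sub_jtilde_comp_powersMap m i j₀ j
  have hhf := id_sub_powersMap_comp_proj_zero m i j₀ j
  have hkg := id_sub_inr_comp_sndSubCorr m i j₀ j
  have hgk := sndSubCorr_comp_inr m j₀ j (M' := M')
  have hgd := comp_eq_comp_of_retract hdh hgk hhf hkg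
  exact ⟨⟨kerEquivOfRetract hgd hdh (proj_zero_comp_powersMap m j₀) hhf, fun _ => rfl⟩,
    ⟨cokerEquivOfRetract hgd hdh hgk hkg, fun _ => rfl⟩⟩

end
end

section
/- In the polynomial ring S[T], one has det_{S[T]}(id − T·(ĩ⁻¹ ∘ j̃)_{S[T]}) = det_{S[T]}(id − Σ_{s=1}^r T^s·(i⁻¹ ∘ j_s ∘ j₀^{s−1})_{S[T]}), where for an S-linear endomorphism f of a finite free S-module V, f_{S[T]} denotes its base change to an S[T]-linear endomorphism of V ⊗_S S[T]; the left-hand side is a determinant of an endomorphism of M^r ⊗_S S[T] and the right-hand side of an endomorphism of M ⊗_S S[T]. -/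
/-!
Because `ĩ` is invertible, `ĩ⁻¹ ∘ j̃` is the block companion map `K` of `M^r` with
`K(x)₀ = Σₛ i⁻¹ jₛ xₛ` and `K(x)ₖ₊₁ = j₀ xₖ`. In a basis, `T K` is a block companion matrix with
first block row `Cₛ = T i⁻¹ jₛ` and subdiagonal blocks `D = T j₀`. The last diagonal block of
`1 - T K` is the identity, and its Schur complement is `1 - K'` for a block companion matrix `K'`
with one block fewer, whose first row merges the last two entries `Cᵣ₋₂, Cᵣ₋₁` into
`Cᵣ₋₂ + Cᵣ₋₁ D`. Induction on `r` gives `det (1 - T K) = det (1 - Σₛ Cₛ Dˢ)`.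
-/

open TensorProduct

namespace Matrix

variable {R ι : Type*} [CommRing R]

def blockCompanion (m : ℕ) (C : Fin (m + 1) → Matrix ι ι R) (D : Matrix ι ι R) :
    Matrix (Fin (m + 1) × ι) (Fin (m + 1) × ι) R :=
  of fun p q =>
    (if p.1 = 0 then C q.1 p.2 q.2 else 0) + (if (q.1 : ℕ) + 1 = p.1 then D p.2 q.2 else 0)

theorem blockCompanion_apply (m : ℕ) (C : Fin (m + 1) → Matrix ι ι R) (D : Matrix ι ι R)
    (p q : Fin (m + 1) × ι) :
    blockCompanion m C D p q =
      (if p.1 = 0 then C q.1 p.2 q.2 else 0) + (if (q.1 : ℕ) + 1 = p.1 then D p.2 q.2 else 0) :=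
  rfl

theorem smul_blockCompanion (m : ℕ) (C : Fin (m + 1) → Matrix ι ι R) (D : Matrix ι ι R) (x : R) :
    x • blockCompanion m C D = blockCompanion m (x • C) (x • D) := by
  ext p q
  simp only [blockCompanion_apply, smul_apply, Pi.smul_apply, smul_eq_mul, mul_add, mul_ite,
    mul_zero]

theorem blockCompanion_map {A : Type*} [CommRing A] (f : R →+* A) (m : ℕ)
    (C : Fin (m + 1) → Matrix ι ι R) (D : Matrix ι ι R) :
    (blockCompanion m C D).map f = blockCompanion m (fun s => (C s).map f) (D.map f) := by
  ext p q
  simp only [blockCompanion_apply, map_apply, map_add, apply_ite f, map_zero]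

def finSuccProdSumEquiv (r : ℕ) (ι : Type*) : (Fin (r + 1) × ι) ⊕ ι ≃ Fin (r + 2) × ι :=
  ((Equiv.sumCongr (Equiv.refl _) (Equiv.punitProd ι).symm).trans
    (Equiv.sumProdDistrib _ _ _).symm).trans
    (Equiv.prodCongr ((Equiv.optionEquivSumPUnit.{0} _).symm.trans finSuccEquivLast.symm)
      (Equiv.refl ι))

@[simp] theorem finSuccProdSumEquiv_inl (r : ℕ) (p : Fin (r + 1) × ι) :
    finSuccProdSumEquiv r ι (.inl p) = (p.1.castSucc, p.2) := by
  simp [finSuccProdSumEquiv]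

@[simp] theorem finSuccProdSumEquiv_inr (r : ℕ) (a : ι) :
    finSuccProdSumEquiv r ι (.inr a) = (Fin.last _, a) := by
  simp [finSuccProdSumEquiv]

variable [DecidableEq ι]

theorem submatrix_one_sub_blockCompanion_succ (r : ℕ) (C : Fin (r + 2) → Matrix ι ι R)
    (D : Matrix ι ι R) :
    (1 - blockCompanion (r + 1) C D).submatrix
        (finSuccProdSumEquiv r ι) (finSuccProdSumEquiv r ι) =
      fromBlocks (1 - blockCompanion r (fun s => C s.castSucc) D)
        (-of fun p a => if p.1 = 0 then C (Fin.last _) p.2 a else 0)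
        (-of fun a q => if q.1 = Fin.last r then D a q.2 else 0) 1 := by
  have hlt : ∀ p : Fin (r + 1), r + 1 + 1 ≠ p := fun p => by omega
  have hlast : ∀ q : Fin (r + 1), q = Fin.last r ↔ (q : ℕ) = r := fun q => Fin.ext_iff
  ext (⟨p, a⟩ | a) (⟨q, b⟩ | b) <;>
    simp [blockCompanion_apply, one_apply, hlt, hlast, (Fin.castSucc_ne_last _).symm]

variable [Fintype ι]

theorem one_sub_blockCompanion_sub_mul (r : ℕ) (C : Fin (r + 2) → Matrix ι ι R)
    (D : Matrix ι ι R) :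
    1 - blockCompanion r (fun s => C s.castSucc) D -
        (-of fun p a => if p.1 = 0 then C (Fin.last _) p.2 a else 0) *
          (-of fun a q => if q.1 = Fin.last r then D a q.2 else 0) =
      1 - blockCompanion r
        (fun s => C s.castSucc + if s = Fin.last r then C (Fin.last _) * D else 0) D := by
  ext ⟨p, a⟩ ⟨q, b⟩
  by_cases hp : p = 0 <;> by_cases hq : q = Fin.last r <;>
    simp [blockCompanion_apply, mul_apply, hp, hq, sub_sub]

theorem sum_blockCompanion_succ (r : ℕ) (C : Fin (r + 2) → Matrix ι ι R) (D : Matrix ι ι R) :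
    ∑ s : Fin (r + 1),
        (C s.castSucc + if s = Fin.last r then C (Fin.last _) * D else 0) * D ^ (s : ℕ) =
      ∑ s : Fin (r + 2), C s * D ^ (s : ℕ) := by
  simp [Fin.sum_univ_castSucc (n := r + 1), add_mul, Finset.sum_add_distrib, mul_assoc,
    ← pow_succ']

theorem det_one_sub_blockCompanion (m : ℕ) (C : Fin (m + 1) → Matrix ι ι R)
    (D : Matrix ι ι R) :
    (1 - blockCompanion m C D).det = (1 - ∑ s, C s * D ^ (s : ℕ)).det := by
  induction m with
  | zero =>
    rw [← det_submatrix_equiv_self (Equiv.uniqueProd ι (Fin 1)).symm]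
    congr 1
    ext a b
    simp [blockCompanion_apply, one_apply]
  | succ r ih =>
    rw [← det_submatrix_equiv_self (finSuccProdSumEquiv r ι),
      submatrix_one_sub_blockCompanion_succ, det_fromBlocks_one₂₂,
      one_sub_blockCompanion_sub_mul, ih, sum_blockCompanion_succ]

end Matrix

namespace LinearMap

variable {R V : Type*} [CommRing R] [AddCommGroup V] [Module R V]

def blockCompanion (m : ℕ) (c : Fin (m + 1) → Module.End R V) (d : Module.End R V) :
    Module.End R (Fin (m + 1) → V) :=
  pi (Fin.cons (∑ s, c s ∘ₗ proj s) fun k => d ∘ₗ proj k.castSucc)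

@[simp] theorem blockCompanion_apply_zero (m : ℕ) (c : Fin (m + 1) → Module.End R V)
    (d : Module.End R V) (x : Fin (m + 1) → V) :
    blockCompanion m c d x 0 = ∑ s, c s (x s) := by
  simp [blockCompanion]

@[simp] theorem blockCompanion_apply_succ (m : ℕ) (c : Fin (m + 1) → Module.End R V)
    (d : Module.End R V) (x : Fin (m + 1) → V) (k : Fin m) :
    blockCompanion m c d x k.succ = d (x k.castSucc) := by
  simp [blockCompanion]

theorem toMatrix_blockCompanion {ι : Type*} [Fintype ι] [DecidableEq ι]
    (b : Module.Basis ι R V) (m : ℕ) (c : Fin (m + 1) → Module.End R V) (d : Module.End R V) :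
    toMatrix ((Pi.basis fun _ : Fin (m + 1) => b).reindex (Equiv.sigmaEquivProd _ _))
      ((Pi.basis fun _ : Fin (m + 1) => b).reindex (Equiv.sigmaEquivProd _ _))
      (blockCompanion m c d) =
    Matrix.blockCompanion m (fun s => toMatrix b b (c s)) (toMatrix b b d) := by
  ext ⟨p, a⟩ ⟨q, a'⟩
  cases p using Fin.cases with
  | zero =>
    simp [toMatrix_apply, Matrix.blockCompanion_apply, Pi.single_apply, apply_ite (c _)]
  | succ k =>
    have hq : k.castSucc = q ↔ (q : ℕ) = k := by rw [Fin.ext_iff, Fin.val_castSucc, eq_comm]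
    simp [toMatrix_apply, Matrix.blockCompanion_apply, Pi.single_apply, hq,
      apply_ite fun v => b.repr (d v) a]

-- Stated for a general `M`: on `A ⊗[R] V`, `rw [map_sub]` fails because the `AddCommMonoid`
-- instance is not reducibly the one underlying `AddCommGroup`.
theorem toMatrix_id_sub {M ι : Type*} [AddCommGroup M] [Module R M] [Fintype ι] [DecidableEq ι]
    (b : Module.Basis ι R M) (f : Module.End R M) :
    toMatrix b b (id - f) = 1 - toMatrix b b f := by
  rw [map_sub, toMatrix_id]

theorem det_one_sub_smul_baseChange_blockCompanion [Module.Free R V] [Module.Finite R V]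
    {A : Type*} [CommRing A] [Algebra R A] (x : A) (m : ℕ) (c : Fin (m + 1) → Module.End R V)
    (d : Module.End R V) :
    LinearMap.det (LinearMap.id - x • baseChange A (blockCompanion m c d)) =
      LinearMap.det (LinearMap.id -
        ∑ s : Fin (m + 1), x ^ ((s : ℕ) + 1) • baseChange A (c s ∘ₗ d ^ (s : ℕ))) := by
  classical
  let b := Module.Free.chooseBasis R V
  let bπ := (Pi.basis fun _ : Fin (m + 1) => b).reindex (Equiv.sigmaEquivProd _ _)
  rw [← det_toMatrix (Algebra.TensorProduct.basis A bπ),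
    ← det_toMatrix (Algebra.TensorProduct.basis A b)]
  simp only [toMatrix_id_sub, map_sum, map_smul, toMatrix_baseChange, bπ,
    toMatrix_blockCompanion, Matrix.blockCompanion_map, Matrix.smul_blockCompanion,
    Matrix.det_one_sub_blockCompanion]
  congr 2
  refine Finset.sum_congr rfl fun s _ => ?_
  rw [Pi.smul_apply, smul_pow, smul_mul_smul, ← pow_succ', toMatrix_comp b b b, ← toMatrix_pow,
    Matrix.map_mul, Matrix.map_pow]

end LinearMap

theorem itilde_comp_blockCompanion {S M M' : Type*} [CommRing S] [AddCommGroup M] [Module S M]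
    [AddCommGroup M'] [Module S M'] (m : ℕ) (i : M ≃ₗ[S] M') (j₀ : M →ₗ[S] M)
    (j : Fin (m + 1) → M →ₗ[S] M') :
    itilde m i.toLinearMap ∘ₗ LinearMap.blockCompanion m (fun s => i.symm.toLinearMap ∘ₗ j s) j₀ =
      jtilde m j₀ j := by
  refine LinearMap.ext fun x => Prod.ext ?_ ?_
  · funext k
    simp [itilde, jtilde]
  · simp [itilde, jtilde, map_sum]

section

variable {S M M' : Type*} [CommRing S] [AddCommGroup M] [Module S M]
  [AddCommGroup M'] [Module S M'] [Module.Free S M] [Module.Finite S M]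
  [Module.Free S M'] [Module.Finite S M']

theorem stmt_6_general (m : ℕ) (i : M ≃ₗ[S] M') (j₀ : M →ₗ[S] M)
    (j : Fin (m + 1) → M →ₗ[S] M')
    (itinv : (Fin m → M) × M' →ₗ[S] (Fin (m + 1) → M))
    (h1 : itinv ∘ₗ itilde m i.toLinearMap = LinearMap.id) :
    LinearMap.det (LinearMap.id - (Polynomial.X : Polynomial S) •
        LinearMap.baseChange (Polynomial S) (itinv ∘ₗ jtilde m j₀ j))
      = LinearMap.det (LinearMap.id - ∑ s : Fin (m + 1),
          ((Polynomial.X : Polynomial S) ^ ((s : ℕ) + 1)) •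
            LinearMap.baseChange (Polynomial S)
              (i.symm.toLinearMap ∘ₗ j s ∘ₗ (j₀ ^ (s : ℕ)))) := by
  have hK : itinv ∘ₗ jtilde m j₀ j =
      LinearMap.blockCompanion m (fun s => i.symm.toLinearMap ∘ₗ j s) j₀ := by
    rw [← itilde_comp_blockCompanion, ← LinearMap.comp_assoc, h1, LinearMap.id_comp]
  rw [hK]
  exact LinearMap.det_one_sub_smul_baseChange_blockCompanion _ _ _ _

/-- with `M`, `M′` finite free and `i : M ≃ M′` an isomorphism, in `S[T]`
one has `det_{S[T]}(id − T·(ĩ⁻¹ ∘ j̃)_{S[T]}) =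
det_{S[T]}(id − Σ_{s=1}^r T^s·(i⁻¹ ∘ j_s ∘ j₀^{s−1})_{S[T]})`, where `f_{S[T]}` denotes
the base change of an `S`-linear endomorphism `f` to `S[T] ⊗_S V` (here `r = m + 1 ≥ 1`
and `ĩ⁻¹` is any two-sided inverse of `ĩ`). -/
theorem stmt_6 (m : ℕ) (i : M ≃ₗ[S] M') (j₀ : M →ₗ[S] M)
    (j : Fin (m + 1) → M →ₗ[S] M')
    (itinv : (Fin m → M) × M' →ₗ[S] (Fin (m + 1) → M))
    (h1 : itinv ∘ₗ itilde m i.toLinearMap = LinearMap.id)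
    (h2 : itilde m i.toLinearMap ∘ₗ itinv = LinearMap.id) :
    LinearMap.det (LinearMap.id - (Polynomial.X : Polynomial S) •
        LinearMap.baseChange (Polynomial S) (itinv ∘ₗ jtilde m j₀ j))
      = LinearMap.det (LinearMap.id - ∑ s : Fin (m + 1),
          ((Polynomial.X : Polynomial S) ^ ((s : ℕ) + 1)) •
            LinearMap.baseChange (Polynomial S)
              (i.symm.toLinearMap ∘ₗ j s ∘ₗ (j₀ ^ (s : ℕ)))) :=
  stmt_6_general m i j₀ j itinv h1

end
end
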